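/- arXiv:dg-ga/9410002 — 3 statements merged into one kernel-verified Lean document; each statement's English description precedes it below -/
import Mathlib

section
/- Let σ be a ℤ-bilinear symmetric form on ℤ × ℤ with values in ℝ that is positive definite (σ(v,v) > 0 for every v ≠ 0). Suppose (b₀, f₀) and (b₁, f₁) are two generating pairs of the abelian group ℤ × ℤ (i.e. each pair generates ℤ × ℤ as a group), and both pairs are σ-orthogonal: σ(b₀, f₀) = 0 and σ(b₁, f₁) = 0. Then {b₁, −b₁, f₁, −f₁} = {b₀, −b₀, f₀, −f₀} as subsets of ℤ × ℤ. -/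
/-!
Write `b₁ = m b₀ + n f₀` and `f₁ = p b₀ + q f₀`. Since both pairs generate `ℤ × ℤ`, their
determinants are units, hence so is `m q - n p`. Orthogonality of `b₁, f₁` reads
`m p σ(b₀, b₀) + n q σ(f₀, f₀) = 0`, so `m p` and `n q` vanish together or have opposite signs.
Then `(m q)(n p) = (m p)(n q) ≤ 0` together with `m q - n p = ±1` forces `m q = 0` or `n p = 0`,
and the change of basis is a signed permutation matrix.
-/

def det₂ {R : Type*} [CommRing R] (v w : R × R) : R := v.1 * w.2 - v.2 * w.1

section det₂

variable {R : Type*} [CommRing R]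

lemma det₂_smul_add_smul (b f : R × R) (m n p q : R) :
    det₂ (m • b + n • f) (p • b + q • f) = (m * q - n * p) * det₂ b f := by
  simp only [det₂, Prod.fst_add, Prod.snd_add, Prod.smul_fst, Prod.smul_snd, smul_eq_mul]
  ring

lemma isUnit_det₂_of_span_eq_top {v w : R × R} (h : Submodule.span R {v, w} = ⊤) :
    IsUnit (det₂ v w) := by
  obtain ⟨a, b, hab⟩ := Submodule.mem_span_pair.mp (h ▸ Submodule.mem_top : ((1, 0) : R × R) ∈ _)
  obtain ⟨c, d, hcd⟩ := Submodule.mem_span_pair.mp (h ▸ Submodule.mem_top : ((0, 1) : R × R) ∈ _)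
  have hdet := congrArg₂ det₂ hab hcd
  rw [det₂_smul_add_smul] at hdet
  exact isUnit_of_mul_isUnit_right (hdet ▸ by simp [det₂] : IsUnit ((a * d - b * c) * det₂ v w))

end det₂

lemma LinearMap.apply_smul_add_smul_of_orthogonal {R M N : Type*} [CommSemiring R]
    [AddCommMonoid M] [AddCommMonoid N] [Module R M] [Module R N] (σ : M →ₗ[R] M →ₗ[R] N)
    {b f : M} (hbf : σ b f = 0) (hfb : σ f b = 0) (m n p q : R) :
    σ (m • b + n • f) (p • b + q • f) = (m * p) • σ b b + (n * q) • σ f f := by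
  simp only [map_add, map_smul, LinearMap.add_apply, LinearMap.smul_apply, hbf, hfb, smul_zero,
    add_zero, zero_add, mul_smul]
  rw [smul_comm p m, smul_comm q n]

lemma Int.eq_zero_or_eq_zero_of_isUnit_sub {a b : ℤ} (hu : IsUnit (a - b)) (h : a * b ≤ 0) :
    a = 0 ∨ b = 0 := by
  by_contra! hab
  rcases Int.isUnit_iff.mp hu with hu | hu <;>
  rcases hab.1.lt_or_gt with ha | ha <;> rcases hab.2.lt_or_gt with hb | hb <;> nlinarith

lemma Int.smul_eq_or_eq_neg_of_isUnit {G : Type*} [AddGroup G] {m : ℤ} (hm : IsUnit m) (x : G) :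
    m • x = x ∨ m • x = -x := by
  rcases Int.isUnit_iff.mp hm with rfl | rfl <;> simp

section coefficients

variable {m n p q : ℤ} {A B : ℝ}

lemma mul_mul_nonpos_of_orthogonal (hA : 0 < A) (hB : 0 < B)
    (horth : (m * p) • A + (n * q) • B = 0) : m * p * (n * q) ≤ 0 := by
  rw [zsmul_eq_mul, zsmul_eq_mul] at horth
  have key : ((m * p * (n * q) : ℤ) : ℝ) * (A * B) = -((n * q : ℤ) * B) ^ 2 := by
    push_cast at horth ⊢
    linear_combination (n * q * B : ℝ) * horth
  have : ((m * p * (n * q) : ℤ) : ℝ) ≤ 0 :=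
    nonpos_of_mul_nonpos_left (key ▸ neg_nonpos.mpr (sq_nonneg _)) (by positivity)
  exact_mod_cast this

lemma eq_zero_and_isUnit_of_orthogonal (hA : 0 < A) (hB : 0 < B)
    (hu : IsUnit (m * q - n * p)) (horth : (m * p) • A + (n * q) • B = 0) (hnp : n * p = 0) :
    n = 0 ∧ p = 0 ∧ IsUnit m ∧ IsUnit q := by
  rw [hnp, sub_zero] at hu
  have hm := isUnit_of_mul_isUnit_left hu
  have hq := isUnit_of_mul_isUnit_right hu
  rw [zsmul_eq_mul, zsmul_eq_mul] at horth
  rcases mul_eq_zero.mp hnp with rfl | rfl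
  · exact ⟨rfl, by simpa [hm.ne_zero, hA.ne'] using horth, hm, hq⟩
  · exact ⟨by simpa [hq.ne_zero, hB.ne'] using horth, rfl, hm, hq⟩

lemma eq_zero_and_isUnit_or_of_orthogonal (hA : 0 < A) (hB : 0 < B)
    (hu : IsUnit (m * q - n * p)) (horth : (m * p) • A + (n * q) • B = 0) :
    (n = 0 ∧ p = 0 ∧ IsUnit m ∧ IsUnit q) ∨ (m = 0 ∧ q = 0 ∧ IsUnit n ∧ IsUnit p) := by
  have hsign : m * q * (n * p) ≤ 0 := by
    rw [show m * q * (n * p) = m * p * (n * q) by ring]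
    exact mul_mul_nonpos_of_orthogonal hA hB horth
  rcases Int.eq_zero_or_eq_zero_of_isUnit_sub hu hsign with hmq | hnp
  · have hu' : IsUnit (n * p - m * q) := by rw [← neg_sub]; exact hu.neg
    exact Or.inr (eq_zero_and_isUnit_of_orthogonal hB hA hu' (by rwa [add_comm]) hmq)
  · exact Or.inl (eq_zero_and_isUnit_of_orthogonal hA hB hu horth hnp)

end coefficients

lemma Set.insert_neg_insert_neg_eq {G : Type*} [InvolutiveNeg G] {a b c d : G}
    (hc : c = a ∨ c = -a) (hd : d = b ∨ d = -b) :
    ({c, -c, d, -d} : Set G) = {a, -a, b, -b} := by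
  rcases hc with rfl | rfl <;> rcases hd with rfl | rfl <;> ext x <;>
    simp only [Set.mem_insert_iff, Set.mem_singleton_iff, neg_neg] <;> tauto

lemma Set.insert_neg_insert_neg_comm {G : Type*} [Neg G] (a b : G) :
    ({a, -a, b, -b} : Set G) = {b, -b, a, -a} := by
  ext x
  simp only [Set.mem_insert_iff, Set.mem_singleton_iff]
  tauto

/-- A σ-orthogonal generating pair of the lattice ℤ × ℤ, for a positive definite
symmetric ℤ-bilinear form σ with real values, is unique up to sign and order. -/
theorem stmt_0 (σ : (ℤ × ℤ) →ₗ[ℤ] (ℤ × ℤ) →ₗ[ℤ] ℝ)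
    (hsymm : ∀ v w, σ v w = σ w v)
    (hpos : ∀ v : ℤ × ℤ, v ≠ 0 → 0 < σ v v)
    (b₀ f₀ b₁ f₁ : ℤ × ℤ)
    (hgen₀ : Submodule.span ℤ ({b₀, f₀} : Set (ℤ × ℤ)) = ⊤)
    (hgen₁ : Submodule.span ℤ ({b₁, f₁} : Set (ℤ × ℤ)) = ⊤)
    (horth₀ : σ b₀ f₀ = 0) (horth₁ : σ b₁ f₁ = 0) :
    ({b₁, -b₁, f₁, -f₁} : Set (ℤ × ℤ)) = {b₀, -b₀, f₀, -f₀} := by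
  obtain ⟨m, n, rfl⟩ := Submodule.mem_span_pair.mp (hgen₀ ▸ Submodule.mem_top : b₁ ∈ _)
  obtain ⟨p, q, rfl⟩ := Submodule.mem_span_pair.mp (hgen₀ ▸ Submodule.mem_top : f₁ ∈ _)
  have hdet₀ := isUnit_det₂_of_span_eq_top hgen₀
  have hdet : IsUnit (m * q - n * p) := by
    have hdet₁ := isUnit_det₂_of_span_eq_top hgen₁
    rw [det₂_smul_add_smul] at hdet₁
    exact isUnit_of_mul_isUnit_left hdet₁
  have hb₀ : b₀ ≠ 0 := by rintro rfl; simp [det₂] at hdet₀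
  have hf₀ : f₀ ≠ 0 := by rintro rfl; simp [det₂] at hdet₀
  rw [σ.apply_smul_add_smul_of_orthogonal horth₀ ((hsymm f₀ b₀).trans horth₀)] at horth₁
  rcases eq_zero_and_isUnit_or_of_orthogonal (hpos b₀ hb₀) (hpos f₀ hf₀) hdet horth₁ with
    ⟨rfl, rfl, hm, hq⟩ | ⟨rfl, rfl, hn, hp⟩
  · simp only [zero_smul, add_zero, zero_add]
    exact Set.insert_neg_insert_neg_eq (Int.smul_eq_or_eq_neg_of_isUnit hm b₀)
      (Int.smul_eq_or_eq_neg_of_isUnit hq f₀)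
  · simp only [zero_smul, add_zero, zero_add]
    rw [Set.insert_neg_insert_neg_comm b₀]
    exact Set.insert_neg_insert_neg_eq (Int.smul_eq_or_eq_neg_of_isUnit hn f₀)
      (Int.smul_eq_or_eq_neg_of_isUnit hp b₀)
end

section
/- For every natural number n, there do NOT exist symmetric positive definite 2×2 real matrices S₀, S₁, …, S_n with the following properties, where σ_k(v, w) := vᵀ S_k w for v, w ∈ ℝ²: (i) σ₀((1,0), (0,1)) = 0; (ii) σ_n((1, n+1), (1, n+2)) = 0; and (iii) for each i ∈ {1, …, n} and every v ∈ ℝ², σ_{i−1}((1, i), v) = σ_i((1, i), v). -/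
/-!
Write `σₖ(x, y) = x ⬝ᵥ Sₖ y`, `uⱼ = (1, j)` and `e = (0, 1)`, so that `uⱼ₊₁ = uⱼ + e`.
Only linearity in the first argument and `σₖ(e, e) > 0` are needed: the quantity
`σₖ(uₖ₊₁, e)` stays positive along the chain, because the gluing condition carries it
from `σₖ` to `σₖ₊₁` and passing from `uₖ₊₁` to `uₖ₊₂` adds `σₖ₊₁(e, e) > 0`; it starts
from `σ₀(u₀, e) = 0`. At the end `σₙ(uₙ₊₁, uₙ₊₂) = σₙ(uₙ₊₁, uₙ₊₁) + σₙ(uₙ₊₁, e) > 0`.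
-/

open Matrix

namespace Matrix

variable {m : Type*} [Fintype m]

lemma PosDef.add_dotProduct_mulVec_pos {M : Matrix m m ℝ} (hM : M.PosDef) {x w : m → ℝ}
    (hx : 0 ≤ x ⬝ᵥ (M *ᵥ w)) (hw : w ≠ 0) : 0 < (x + w) ⬝ᵥ (M *ᵥ w) := by
  have hww : 0 < w ⬝ᵥ (M *ᵥ w) := by simpa using hM.dotProduct_mulVec_pos hw
  rw [add_dotProduct]
  linarith

lemma PosDef.dotProduct_mulVec_add_pos {M : Matrix m m ℝ} (hM : M.PosDef) {x w : m → ℝ}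
    (hx : x ≠ 0) (hw : 0 < x ⬝ᵥ (M *ᵥ w)) : 0 < x ⬝ᵥ (M *ᵥ (x + w)) := by
  have hxx : 0 < x ⬝ᵥ (M *ᵥ x) := by simpa using hM.dotProduct_mulVec_pos hx
  rw [mulVec_add, dotProduct_add]
  linarith

lemma PosDef.chain_dotProduct_mulVec_pos {n : ℕ} {S : Fin (n + 1) → Matrix m m ℝ}
    (hS : ∀ k, (S k).PosDef) {x : ℕ → m → ℝ} {w : m → ℝ} (hw : w ≠ 0)
    (hx : ∀ j, x (j + 1) = x j + w) (h₀ : 0 ≤ x 0 ⬝ᵥ (S 0 *ᵥ w))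
    (hglue : ∀ i : Fin n, x (i + 1) ⬝ᵥ (S i.castSucc *ᵥ w) = x (i + 1) ⬝ᵥ (S i.succ *ᵥ w))
    (k : Fin (n + 1)) : 0 < x (k + 1) ⬝ᵥ (S k *ᵥ w) := by
  induction k using Fin.induction with
  | zero =>
    rw [Fin.val_zero, hx]
    exact (hS 0).add_dotProduct_mulVec_pos h₀ hw
  | succ i ih =>
    rw [Fin.val_succ, hx]
    exact (hS i.succ).add_dotProduct_mulVec_pos (hglue i ▸ ih.le) hw

end Matrix

/-- The compatibility conditions of Example 4.3 cannot be satisfied: there are no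
symmetric positive definite 2×2 matrices S₀, …, S_n with
σ₀((1,0),(0,1)) = 0, σ_n((1,n+1),(1,n+2)) = 0, and
σ_{i-1}((1,i), ·) = σ_i((1,i), ·) for i = 1, …, n. -/
theorem stmt_2 (n : ℕ) :
    ¬ ∃ S : Fin (n + 1) → Matrix (Fin 2) (Fin 2) ℝ,
      (∀ k, (S k).PosDef) ∧
      (![1, 0] ⬝ᵥ (S 0 *ᵥ ![0, 1]) = 0) ∧
      (![1, (n : ℝ) + 1] ⬝ᵥ (S (Fin.last n) *ᵥ ![1, (n : ℝ) + 2]) = 0) ∧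
      (∀ i : Fin n, ∀ v : Fin 2 → ℝ,
        ![1, (i : ℝ) + 1] ⬝ᵥ (S i.castSucc *ᵥ v) =
          ![1, (i : ℝ) + 1] ⬝ᵥ (S i.succ *ᵥ v)) := by
  rintro ⟨S, hS, h₀, hlast, hglue⟩
  set u : ℕ → Fin 2 → ℝ := fun j ↦ ![1, (j : ℝ)]
  have hu : ∀ j, u (j + 1) = u j + ![0, 1] := fun j ↦ by
    ext i; fin_cases i <;> simp [u]
  have hpos := PosDef.chain_dotProduct_mulVec_pos hS (by simp) hu (by simp only [u, Nat.cast_zero, h₀, le_refl])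
    (fun i ↦ by simpa [u] using hglue i ![0, 1]) (Fin.last n)
  have hend := (hS (Fin.last n)).dotProduct_mulVec_add_pos (by simp [u]) hpos
  rw [← hu] at hend
  simp only [u, Fin.val_last, Nat.cast_add, Nat.cast_one, add_assoc, one_add_one_eq_two] at hend
  exact hend.ne' hlast
end

section
/- For every real number a > 0 there exists ε > 0 with the following property: for every twice differentiable function φ : ℝ → ℝ satisfying 0 ≤ φ(t) ≤ 1, |φ′(t)| ≤ ε and |φ″(t)| ≤ ε for all t ∈ ℝ, the function f(t) = e^{−t}·(φ(t) + (1 − φ(t))·a) is positive, strictly decreasing (strictly antitone) on ℝ, and strictly convex on ℝ. -/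
/-!
Writing `g = φ + (1 - φ) a`, one has `(e^{-t} g)' = e^{-t} (g' - g)` and
`(e^{-t} g)'' = e^{-t} (g'' - 2 g' + g)`, so `e^{-t} g` is positive, strictly decreasing and
strictly convex as soon as `2 |g'| + |g''| < g`. Here `g` is a convex combination of `1` and `a`,
hence `g ≥ min 1 a`, while `g' = (1 - a) φ'` and `g'' = (1 - a) φ''` are `O(ε)`.
-/

open Real Set

section ExpNegMul

variable {g : ℝ → ℝ}

theorem hasDerivAt_exp_neg_mul {g' t : ℝ} (hg : HasDerivAt g g' t) :
    HasDerivAt (fun t => exp (-t) * g t) (exp (-t) * (g' - g t)) t := by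
  have he : HasDerivAt (fun t : ℝ => exp (-t)) (-exp (-t)) t := by
    simpa using (hasDerivAt_neg t).exp
  exact (he.mul hg).congr_deriv (by ring)

theorem deriv_exp_neg_mul (hg : Differentiable ℝ g) :
    deriv (fun t => exp (-t) * g t) = fun t => exp (-t) * (deriv g t - g t) :=
  funext fun t => (hasDerivAt_exp_neg_mul (hg t).hasDerivAt).deriv

theorem iterate_deriv_two_exp_neg_mul (hg : Differentiable ℝ g)
    (hg' : Differentiable ℝ (deriv g)) (t : ℝ) :
    deriv^[2] (fun t => exp (-t) * g t) t =
      exp (-t) * (deriv (deriv g) t - 2 * deriv g t + g t) := by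
  rw [Function.iterate_succ_apply, Function.iterate_one, deriv_exp_neg_mul hg]
  exact (hasDerivAt_exp_neg_mul ((hg' t).hasDerivAt.sub (hg t).hasDerivAt)).deriv.trans
    (by simp only [Pi.sub_apply]; ring)

theorem strictAnti_exp_neg_mul (hg : Differentiable ℝ g) (h : ∀ t, deriv g t < g t) :
    StrictAnti fun t => exp (-t) * g t :=
  strictAnti_of_deriv_neg fun t => by
    rw [deriv_exp_neg_mul hg]
    exact mul_neg_of_pos_of_neg (exp_pos _) (sub_neg.2 (h t))

theorem strictConvexOn_exp_neg_mul (hg : Differentiable ℝ g) (hg' : Differentiable ℝ (deriv g))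
    (h : ∀ t, 2 * deriv g t < deriv (deriv g) t + g t) :
    StrictConvexOn ℝ univ fun t => exp (-t) * g t :=
  strictConvexOn_univ_of_deriv2_pos (continuous_neg.rexp.mul hg.continuous) fun t => by
    rw [iterate_deriv_two_exp_neg_mul hg hg']
    exact mul_pos (exp_pos _) (by linarith [h t])

theorem exp_neg_mul_pos_strictAnti_strictConvexOn (hg : Differentiable ℝ g)
    (hg' : Differentiable ℝ (deriv g))
    (hbound : ∀ t, 2 * |deriv g t| + |deriv (deriv g) t| < g t) :
    (∀ t, 0 < exp (-t) * g t) ∧ StrictAnti (fun t => exp (-t) * g t) ∧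
      StrictConvexOn ℝ univ (fun t => exp (-t) * g t) := by
  have hg_pos t : 0 < g t := by
    linarith [hbound t, abs_nonneg (deriv g t), abs_nonneg (deriv (deriv g) t)]
  refine ⟨fun t => mul_pos (exp_pos _) (hg_pos t), strictAnti_exp_neg_mul hg fun t => ?_,
    strictConvexOn_exp_neg_mul hg hg' fun t => ?_⟩
  · linarith [hbound t, le_abs_self (deriv g t), abs_nonneg (deriv g t),
      abs_nonneg (deriv (deriv g) t)]
  · linarith [hbound t, le_abs_self (deriv g t), neg_abs_le (deriv (deriv g) t)]

end ExpNegMul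

theorem min_le_add_one_sub_mul {x : ℝ} (h0 : 0 ≤ x) (h1 : x ≤ 1) (a : ℝ) :
    min 1 a ≤ x + (1 - x) * a := by
  nlinarith [mul_nonneg h0 (sub_nonneg.2 (min_le_left 1 a)),
    mul_nonneg (sub_nonneg.2 h1) (sub_nonneg.2 (min_le_right 1 a))]

/-- For every a > 0 there is ε > 0 such that for every twice differentiable
function φ with 0 ≤ φ ≤ 1 and |φ'|, |φ''| ≤ ε, the function
t ↦ e^{-t}(φ(t) + (1 - φ(t))a) is positive, strictly decreasing and strictly convex. -/
theorem stmt_3 (a : ℝ) (ha : 0 < a) :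
    ∃ ε > 0, ∀ φ : ℝ → ℝ,
      (∀ t, DifferentiableAt ℝ φ t) →
      (∀ t, DifferentiableAt ℝ (deriv φ) t) →
      (∀ t, 0 ≤ φ t) → (∀ t, φ t ≤ 1) →
      (∀ t, |deriv φ t| ≤ ε) →
      (∀ t, |deriv (deriv φ) t| ≤ ε) →
      (∀ t, 0 < Real.exp (-t) * (φ t + (1 - φ t) * a)) ∧
        StrictAnti (fun t => Real.exp (-t) * (φ t + (1 - φ t) * a)) ∧
        StrictConvexOn ℝ Set.univ (fun t => Real.exp (-t) * (φ t + (1 - φ t) * a)) := by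
  set ε := min 1 a / (3 * (|1 - a| + 1)) with hε_def
  have hε : 0 < ε := by positivity
  have hε_small : 3 * |1 - a| * ε < min 1 a := by
    have : 3 * (|1 - a| + 1) * ε = min 1 a := by rw [hε_def]; field_simp
    linarith
  refine ⟨ε, hε, fun φ hφ hφ' h0 h1 hd1 hd2 => ?_⟩
  have hg : (fun t => φ t + (1 - φ t) * a) = fun t => a + (1 - a) * φ t :=
    funext fun t => by ring
  have hdg : deriv (fun t => φ t + (1 - φ t) * a) = fun t => (1 - a) * deriv φ t := by
    rw [hg]; simp only [deriv_const_add', deriv_const_mul_field']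
  have hφ : Differentiable ℝ φ := hφ
  have hφ' : Differentiable ℝ (deriv φ) := hφ'
  refine exp_neg_mul_pos_strictAnti_strictConvexOn (hφ.add ((hφ.const_sub 1).mul_const a))
    (by rw [hdg]; exact hφ'.const_mul _) fun t => ?_
  rw [hdg, deriv_const_mul_field']
  calc 2 * |(1 - a) * deriv φ t| + |(1 - a) * deriv (deriv φ) t|
      = |1 - a| * (2 * |deriv φ t| + |deriv (deriv φ) t|) := by rw [abs_mul, abs_mul]; ring
    _ ≤ |1 - a| * (2 * ε + ε) := by gcongr; exacts [hd1 t, hd2 t]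
    _ < min 1 a := by linarith
    _ ≤ φ t + (1 - φ t) * a := min_le_add_one_sub_mul (h0 t) (h1 t) a
end
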